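/- arXiv:1701.02716 — 3 statements merged into one kernel-verified Lean document; each statement's English description precedes it below -/
import Mathlib

section
/- Let G be a connected graph on n ≥ 4 vertices. Then the sum-Balaban index SJ(G) = (m/(m−n+2)) · Σ_{uv∈E(G)} 1/√(w(u)+w(v)) satisfies SJ(G) ≥ 2√(n/(n−1)). -/
open Finset

noncomputable def transmission {V : Type*} [Fintype V] (G : SimpleGraph V) (v : V) : ℕ :=
  ∑ x, G.dist v x

noncomputable def edgeTerm {V : Type*} [Fintype V] (G : SimpleGraph V) : Sym2 V → ℝ :=
  Sym2.lift ⟨fun u v => 1 / Real.sqrt ((transmission G u : ℝ) + transmission G v),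
    by intro u v; simp [add_comm]⟩

noncomputable def sumBalaban {V : Type*} [Fintype V] [DecidableEq V]
    (G : SimpleGraph V) [DecidableRel G.Adj] : ℝ :=
  ((G.edgeFinset.card : ℝ) / ((G.edgeFinset.card : ℝ) - (Fintype.card V : ℝ) + 2)) *
    ∑ e ∈ G.edgeFinset, edgeTerm G e

/-!
Along a shortest path from `v` to `x` the distances from `v` take every value below
`dist v x`, so at least `dist v x` vertices are strictly closer to `v` than `x`. Summing over
`x` counts each unordered pair of vertices at most once, whence `2 w(v) ≤ n (n - 1)`, the
transmission of an end of a path. Every edge term is therefore at least `1 / √(n (n - 1))`,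
and with `m ≥ n - 1` edges,
`SJ ≥ m² / ((m - n + 2) √(n (n - 1))) ≥ 2n / √(n (n - 1)) = 2 √(n / (n - 1))`,
the middle step being `m² - 2n (m - n + 2) = (m - n)² + n (n - 4) ≥ 0`.
-/

namespace Finset

variable {ι α : Type*}

lemma two_mul_card_filter_lt_le [LinearOrder α] (s : Finset ι) (f : ι → α) :
    2 * #{p ∈ s ×ˢ s | f p.2 < f p.1} ≤ #s * (#s - 1) := by
  classical
  set P := {p ∈ s ×ˢ s | f p.2 < f p.1}
  set Q := P.map (Equiv.prodComm ι ι).toEmbedding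
  have hdisj : Disjoint P Q := by
    simp only [P, Q, disjoint_left, mem_map_equiv, mem_filter]
    intro p hp hq
    exact lt_asymm hp.2 hq.2
  have hsub : P ∪ Q ⊆ s.offDiag := by
    intro p hp
    simp only [P, Q, mem_union, mem_map_equiv, mem_filter, mem_product, mem_offDiag] at hp ⊢
    rcases hp with ⟨⟨h1, h2⟩, hlt⟩ | ⟨⟨h2, h1⟩, hlt⟩
    · exact ⟨h1, h2, fun h => hlt.ne (by rw [h])⟩
    · exact ⟨h1, h2, fun h => hlt.ne (by simp [h])⟩
  calc 2 * #P = #(P ∪ Q) := by rw [card_union_of_disjoint hdisj, card_map, two_mul]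
    _ ≤ #s.offDiag := card_le_card hsub
    _ = #s * (#s - 1) := by rw [offDiag_card, Nat.mul_sub_one]

lemma two_mul_sum_le_of_le_card_filter_lt (s : Finset ι) (f : ι → ℕ)
    (h : ∀ x ∈ s, f x ≤ #{y ∈ s | f y < f x}) :
    2 * ∑ x ∈ s, f x ≤ #s * (#s - 1) :=
  calc 2 * ∑ x ∈ s, f x ≤ 2 * ∑ x ∈ s, #{y ∈ s | f y < f x} := by gcongr with x hx; exact h x hx
    _ = 2 * #{p ∈ s ×ˢ s | f p.2 < f p.1} := by
      rw [card_filter, sum_product]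
      exact congrArg _ (sum_congr rfl fun x _ => card_filter _ _)
    _ ≤ #s * (#s - 1) := two_mul_card_filter_lt_le s f

end Finset

namespace SimpleGraph

variable {V : Type*} {G : SimpleGraph V}

lemma Walk.dist_getVert_of_length_eq_dist {u v : V} (p : G.Walk u v)
    (hp : p.length = G.dist u v) {i : ℕ} (hi : i ≤ p.length) :
    G.dist u (p.getVert i) = i := by
  have htake := dist_le (p.take i)
  have hdrop := dist_le (p.drop i)
  have htri := (p.drop i).reachable.dist_triangle_right u
  simp only [take_length, drop_length] at htake hdrop
  omega

lemma Connected.dist_le_card_filter_dist_lt [Fintype V] (hG : G.Connected) (u x : V) :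
    G.dist u x ≤ #{y | G.dist u y < G.dist u x} := by
  obtain ⟨p, hp⟩ := hG.exists_walk_length_eq_dist u x
  have hdist : ∀ i < G.dist u x, G.dist u (p.getVert i) = i := fun i hi =>
    p.dist_getVert_of_length_eq_dist hp (by omega)
  calc G.dist u x = #(range (G.dist u x)) := (card_range _).symm
    _ ≤ #{y | G.dist u y < G.dist u x} := by
      refine card_le_card_of_injOn p.getVert (fun i hi => ?_) (fun i hi j hj hij => ?_)
      · simp only [coe_range, Set.mem_Iio, coe_filter, mem_univ, true_and,
          Set.mem_ofPred_eq] at hi ⊢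
        rwa [hdist i hi]
      · simp only [coe_range, Set.mem_Iio] at hi hj
        rw [← hdist i hi, ← hdist j hj, hij]

lemma Connected.two_mul_transmission_le [Fintype V] (hG : G.Connected) (v : V) :
    2 * transmission G v ≤ Fintype.card V * (Fintype.card V - 1) :=
  two_mul_sum_le_of_le_card_filter_lt univ _ fun x _ => hG.dist_le_card_filter_dist_lt v x

lemma Connected.one_div_sqrt_le_edgeTerm [Fintype V] (hG : G.Connected) {e : Sym2 V}
    (he : e ∈ G.edgeSet) :
    1 / √((Fintype.card V : ℝ) * (Fintype.card V - 1)) ≤ edgeTerm G e := by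
  induction e using Sym2.ind with
  | _ u v =>
  have hn : 1 ≤ Fintype.card V := Fintype.card_pos_iff.mpr hG.nonempty
  have hu : 1 ≤ transmission G u := by
    rw [← dist_eq_one_iff_adj.mpr he]
    exact single_le_sum (f := G.dist u) (fun _ _ => Nat.zero_le _) (mem_univ v)
  have hsum : transmission G u + transmission G v ≤ Fintype.card V * (Fintype.card V - 1) := by
    have := hG.two_mul_transmission_le u
    have := hG.two_mul_transmission_le v
    omega
  have hsum' : (transmission G u : ℝ) + transmission G v ≤
      (Fintype.card V : ℝ) * (Fintype.card V - 1) := by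
    have := (Nat.cast_le (α := ℝ)).mpr hsum
    push_cast [Nat.cast_sub hn] at this
    exact this
  have hpos : (0 : ℝ) < transmission G u + transmission G v := by
    have : (1 : ℝ) ≤ transmission G u := by exact_mod_cast hu
    positivity
  exact one_div_le_one_div_of_le (Real.sqrt_pos.mpr hpos) (Real.sqrt_le_sqrt hsum')

end SimpleGraph

lemma two_mul_sqrt_div_le {n m : ℝ} (hn : 4 ≤ n) (hm : n - 1 ≤ m) :
    2 * √(n / (n - 1)) ≤ m / (m - n + 2) * (m * (1 / √(n * (n - 1)))) := by
  have hsqrt : √(n / (n - 1)) = n / √(n * (n - 1)) := by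
    rw [show n / (n - 1) = n ^ 2 / (n * (n - 1)) by field_simp,
      Real.sqrt_div (by positivity), Real.sqrt_sq (by linarith)]
  have hquad : 2 * n ≤ m / (m - n + 2) * m := by
    rw [div_mul_eq_mul_div, le_div_iff₀ (by linarith)]
    nlinarith [sq_nonneg (m - n)]
  have hD : 0 < √(n * (n - 1)) := Real.sqrt_pos.mpr (by nlinarith)
  rw [hsqrt, mul_one_div, ← mul_div_assoc, ← mul_div_assoc, div_le_div_iff_of_pos_right hD]
  exact hquad

theorem stmt_2 {V : Type*} [Fintype V] [DecidableEq V] (G : SimpleGraph V)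
    [DecidableRel G.Adj] (hG : G.Connected) (hn : 4 ≤ Fintype.card V) :
    sumBalaban G ≥ 2 * Real.sqrt ((Fintype.card V : ℝ) / ((Fintype.card V : ℝ) - 1)) := by
  have hm : (Fintype.card V : ℝ) - 1 ≤ #G.edgeFinset := by
    have := hG.card_vert_le_card_edgeSet_add_one
    rw [Nat.card_eq_fintype_card, Nat.card_eq_fintype_card, ← G.edgeFinset_card] at this
    have : (Fintype.card V : ℝ) ≤ #G.edgeFinset + 1 := by exact_mod_cast this
    linarith
  have hsum : #G.edgeFinset * (1 / √((Fintype.card V : ℝ) * (Fintype.card V - 1))) ≤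
      ∑ e ∈ G.edgeFinset, edgeTerm G e := by
    simpa using card_nsmul_le_sum _ _ _ fun e he =>
      hG.one_div_sqrt_le_edgeTerm (G.mem_edgeFinset.mp he)
  calc 2 * √((Fintype.card V : ℝ) / (Fintype.card V - 1))
      ≤ _ := two_mul_sqrt_div_le (by exact_mod_cast hn) hm
    _ ≤ sumBalaban G :=
      mul_le_mul_of_nonneg_left hsum (div_nonneg (Nat.cast_nonneg _) (by linarith))
end

section
/- In the balanced dumbbell graph D_{a,b}, the path vertex v_i (0 ≤ i ≤ b−1) has transmission w(v_i) = i²/2 + (b−i)²/2 + ab − b/2 + i + a. -/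
open Finset

def dumbbell (a b a' : ℕ) : SimpleGraph ((Fin a ⊕ Fin b) ⊕ Fin a') :=
  SimpleGraph.fromRel (fun x y =>
    match x, y with
    | .inl (.inl _), .inl (.inl _) => True
    | .inr _, .inr _ => True
    | .inl (.inr i), .inl (.inr j) => (i : ℕ) + 1 = (j : ℕ)
    | .inl (.inl _), .inl (.inr i) => (i : ℕ) = 0
    | .inl (.inr i), .inr _ => (i : ℕ) = b - 1
    | _, _ => False)

noncomputable instance (a b a' : ℕ) : DecidableRel (dumbbell a b a').Adj :=
  Classical.decRel _

section DumbbellAux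

variable {a b a' : ℕ}

lemma dumbbell_adj_path {j k : Fin b} (h : (j:ℕ) + 1 = (k:ℕ)) :
    (dumbbell a b a').Adj (.inl (.inr j)) (.inl (.inr k)) := by
  rw [dumbbell, SimpleGraph.fromRel_adj]
  refine ⟨?_, Or.inl h⟩
  simp only [ne_eq, Sum.inl.injEq, Sum.inr.injEq]
  intro he; subst he; omega

lemma dumbbell_adj_left (x : Fin a) {j : Fin b} (h : (j:ℕ) = 0) :
    (dumbbell a b a').Adj (.inl (.inl x)) (.inl (.inr j)) := by
  rw [dumbbell, SimpleGraph.fromRel_adj]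
  exact ⟨by simp, Or.inl h⟩

lemma dumbbell_adj_right {j : Fin b} (h : (j:ℕ) = b - 1) (x : Fin a') :
    (dumbbell a b a').Adj (.inl (.inr j)) (.inr x) := by
  rw [dumbbell, SimpleGraph.fromRel_adj]
  exact ⟨by simp, Or.inl h⟩

lemma dumbbell_walk_path : ∀ (n : ℕ) (j k : Fin b), (k:ℕ) = (j:ℕ) + n →
    ∃ p : (dumbbell a b a').Walk (.inl (.inr j)) (.inl (.inr k)), p.length = n := by
  intro n
  induction n with
  | zero =>
    intro j k h
    have : j = k := Fin.ext (by omega)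
    subst this
    exact ⟨.nil, rfl⟩
  | succ n ih =>
    intro j k h
    have hk' : (j:ℕ) + n < b := by have := k.isLt; omega
    obtain ⟨p, hp⟩ := ih j ⟨(j:ℕ) + n, hk'⟩ rfl
    have hadj : (dumbbell a b a').Adj (.inl (.inr (⟨(j:ℕ) + n, hk'⟩ : Fin b))) (.inl (.inr k)) :=
      dumbbell_adj_path (by simp; omega)
    exact ⟨p.concat hadj, by rw [SimpleGraph.Walk.length_concat, hp]⟩

def dumbbellPos (b : ℕ) : (Fin a ⊕ Fin b) ⊕ Fin a' → ℤ
  | .inl (.inl _) => -1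
  | .inl (.inr j) => ((j:ℕ) : ℤ)
  | .inr _ => (b : ℤ)

lemma dumbbell_lip {x y} (h : (dumbbell a b a').Adj x y) :
    |dumbbellPos b x - dumbbellPos b y| ≤ 1 := by
  rw [dumbbell, SimpleGraph.fromRel_adj] at h
  obtain ⟨hne, h | h⟩ := h <;> rcases x with (x|x)|x <;> rcases y with (y|y)|y <;>
    (try simp_all [dumbbellPos, abs_le]) <;>
    first
      | omega
      | (have := x.isLt; have := y.isLt; omega)
      | (have := x.isLt; omega)
      | (have := y.isLt; omega)

lemma dumbbell_walk_bound {x y} (p : (dumbbell a b a').Walk x y) :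
    |dumbbellPos b x - dumbbellPos b y| ≤ (p.length : ℤ) := by
  induction p with
  | nil => simp
  | @cons u v w h p ih =>
    have h1 := dumbbell_lip h
    have h2 : |dumbbellPos b u - dumbbellPos b w|
        ≤ |dumbbellPos b u - dumbbellPos b v| + |dumbbellPos b v - dumbbellPos b w| :=
      abs_sub_le _ _ _
    rw [SimpleGraph.Walk.length_cons]
    push_cast
    linarith

lemma dumbbell_dist_lower {x y} (h : (dumbbell a b a').Reachable x y) :
    |dumbbellPos b x - dumbbellPos b y| ≤ ((dumbbell a b a').dist x y : ℤ) := by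
  obtain ⟨p, hp⟩ := h.exists_walk_length_eq_dist
  rw [← hp]
  exact dumbbell_walk_bound p

lemma dumbbell_dist_K (i : Fin b) (x : Fin a) :
    ((dumbbell a b a').dist (.inl (.inr i)) (.inl (.inl x)) : ℤ) = (i:ℕ) + 1 := by
  have h0 : (0:ℕ) < b := i.pos
  obtain ⟨p, hp⟩ := dumbbell_walk_path (a := a) (a' := a') (i:ℕ) ⟨0, h0⟩ i (by simp)
  let q := p.reverse.concat ((dumbbell_adj_left x (j := ⟨0, h0⟩) rfl).symm)
  have hql : q.length = (i:ℕ) + 1 := by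
    simp [q, SimpleGraph.Walk.length_concat, SimpleGraph.Walk.length_reverse, hp]
  have upper := SimpleGraph.dist_le q
  have lower := dumbbell_dist_lower ⟨q⟩
  simp only [dumbbellPos] at lower
  rw [hql] at upper
  rw [abs_of_nonneg (by omega)] at lower
  omega

lemma dumbbell_dist_R (i : Fin b) (x : Fin a') :
    ((dumbbell a b a').dist (.inl (.inr i)) (.inr x) : ℤ) = (b:ℤ) - (i:ℕ) := by
  have h1 : b - 1 < b := by have := i.isLt; omega
  obtain ⟨p, hp⟩ := dumbbell_walk_path (a := a) (a' := a') (b - 1 - (i:ℕ)) i ⟨b - 1, h1⟩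
    (by have := i.isLt; simp; omega)
  let q := p.concat (dumbbell_adj_right (j := ⟨b - 1, h1⟩) rfl x)
  have hql : q.length = b - (i:ℕ) := by
    have := i.isLt
    simp [q, SimpleGraph.Walk.length_concat, hp]
    omega
  have upper := SimpleGraph.dist_le q
  have lower := dumbbell_dist_lower ⟨q⟩
  simp only [dumbbellPos] at lower
  rw [hql] at upper
  have hib : (i:ℕ) < b := i.isLt
  rw [abs_of_nonpos (by push_cast; omega), neg_sub] at lower
  omega

lemma dumbbell_dist_P (i j : Fin b) :
    ((dumbbell a b a').dist (.inl (.inr i)) (.inl (.inr j)) : ℤ)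
      = |((i:ℕ):ℤ) - ((j:ℕ):ℤ)| := by
  rcases le_total (i:ℕ) (j:ℕ) with h | h
  · obtain ⟨p, hp⟩ := dumbbell_walk_path (a := a) (a' := a') ((j:ℕ) - (i:ℕ)) i j (by omega)
    have upper := SimpleGraph.dist_le p
    have lower := dumbbell_dist_lower ⟨p⟩
    simp only [dumbbellPos] at lower
    rw [hp] at upper
    rw [abs_of_nonpos (by push_cast; omega), neg_sub] at lower ⊢
    omega
  · rw [SimpleGraph.dist_comm]
    obtain ⟨p, hp⟩ := dumbbell_walk_path (a := a) (a' := a') ((i:ℕ) - (j:ℕ)) j i (by omega)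
    have upper := SimpleGraph.dist_le p
    have lower := dumbbell_dist_lower ⟨p⟩
    simp only [dumbbellPos] at lower
    rw [hp] at upper
    rw [abs_of_nonpos (by push_cast; omega), neg_sub] at lower
    rw [abs_of_nonneg (by push_cast; omega)]
    omega

end DumbbellAux

lemma gaussR : ∀ n : ℕ, ∑ j ∈ Finset.range n, (j:ℝ) = n * (n - 1) / 2 := by
  intro n
  induction n with
  | zero => simp
  | succ n ih => rw [Finset.sum_range_succ, ih]; push_cast; ring

lemma absSum : ∀ (b : ℕ) (i : ℕ), i < b →
    ∑ j ∈ Finset.range b, |(i:ℝ) - (j:ℝ)| =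
      (i:ℝ)^2/2 + ((b:ℝ) - i)^2/2 + i - (b:ℝ)/2 := by
  intro b
  induction b with
  | zero => intro i hi; exact absurd hi (Nat.not_lt_zero i)
  | succ b ih =>
    intro i hi
    rw [Finset.sum_range_succ]
    rcases Nat.lt_or_ge i b with h | h
    · rw [ih i h]
      have hib : (i:ℝ) ≤ b := by exact_mod_cast h.le
      rw [abs_sub_comm, abs_of_nonneg (by linarith)]
      push_cast
      ring
    · have hieq : i = b := by omega
      subst hieq
      have e1 : ∑ j ∈ Finset.range i, |(i:ℝ) - j| = ∑ j ∈ Finset.range i, ((i:ℝ) - j) := by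
        refine Finset.sum_congr rfl fun j hj => abs_of_nonneg ?_
        have hj' : (j:ℝ) ≤ i := by exact_mod_cast (Finset.mem_range.mp hj).le
        linarith
      rw [e1, Finset.sum_sub_distrib, Finset.sum_const, Finset.card_range, gaussR,
        nsmul_eq_mul, sub_self, abs_zero]
      push_cast
      ring

theorem stmt_5 (a b : ℕ) (ha : 1 ≤ a) (hb : 2 ≤ b) (i : Fin b) :
    (transmission (dumbbell a b a) (Sum.inl (Sum.inr i)) : ℝ)
      = (i : ℝ) ^ 2 / 2 + ((b : ℝ) - (i : ℝ)) ^ 2 / 2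
        + (a : ℝ) * b - (b : ℝ) / 2 + (i : ℝ) + a := by
  have hcast : (transmission (dumbbell a b a) (Sum.inl (Sum.inr i)) : ℝ)
      = ∑ x, ((dumbbell a b a).dist (Sum.inl (Sum.inr i)) x : ℝ) := by
    rw [transmission]; push_cast; rfl
  rw [hcast, Fintype.sum_sum_type, Fintype.sum_sum_type]
  have s1 : ∑ x : Fin a,
      ((dumbbell a b a).dist (Sum.inl (Sum.inr i)) (Sum.inl (Sum.inl x)) : ℝ)
      = a * ((i:ℝ) + 1) := by
    have e : ∀ x : Fin a,
        ((dumbbell a b a).dist (Sum.inl (Sum.inr i)) (Sum.inl (Sum.inl x)) : ℝ)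
        = (i:ℝ) + 1 := by
      intro x
      have h := congrArg (Int.cast : ℤ → ℝ) (dumbbell_dist_K (a := a) (a' := a) i x)
      push_cast at h
      exact h
    rw [Finset.sum_congr rfl (fun x _ => e x), Finset.sum_const, Finset.card_univ,
      Fintype.card_fin, nsmul_eq_mul]
  have s3 : ∑ x : Fin a,
      ((dumbbell a b a).dist (Sum.inl (Sum.inr i)) (Sum.inr x) : ℝ)
      = a * ((b:ℝ) - i) := by
    have e : ∀ x : Fin a,
        ((dumbbell a b a).dist (Sum.inl (Sum.inr i)) (Sum.inr x) : ℝ)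
        = (b:ℝ) - i := by
      intro x
      have h := congrArg (Int.cast : ℤ → ℝ) (dumbbell_dist_R (a := a) (a' := a) i x)
      push_cast at h
      exact h
    rw [Finset.sum_congr rfl (fun x _ => e x), Finset.sum_const, Finset.card_univ,
      Fintype.card_fin, nsmul_eq_mul]
  have s2 : ∑ j : Fin b,
      ((dumbbell a b a).dist (Sum.inl (Sum.inr i)) (Sum.inl (Sum.inr j)) : ℝ)
      = (i:ℝ)^2/2 + ((b:ℝ) - i)^2/2 + i - (b:ℝ)/2 := by
    have e : ∀ j : Fin b,
        ((dumbbell a b a).dist (Sum.inl (Sum.inr i)) (Sum.inl (Sum.inr j)) : ℝ)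
        = |(i:ℝ) - ((j:ℕ):ℝ)| := by
      intro j
      have h := congrArg (Int.cast : ℤ → ℝ) (dumbbell_dist_P (a := a) (a' := a) i j)
      push_cast at h
      exact h
    rw [Finset.sum_congr rfl (fun j _ => e j),
      Fin.sum_univ_eq_sum_range (fun j => |(i:ℝ) - (j:ℝ)|) b]
    exact absSum b i i.isLt
  rw [s1, s2, s3]
  ring
end

section
/- As n → ∞ with a ~ c√n for a fixed constant c > 0 and b = n − 2a, the sum-Balaban index of the balanced dumbbell graph D_{a,b} is bounded above and below by positive constants independent of n (i.e., SJ(D_{a,b}) ∈ Θ(1)). -/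
open Finset

open Filter

/-!
With `m = a² + a + b - 1` edges and `n = 2a + b` vertices, the prefactor of `SJ(D_{a,b})` is
`m / (m - n + 2) = m / (a² - a + 1)`. Every vertex lies within distance `b` of the first path
vertex, so all transmissions are at most `n · 2b`. Conversely the height `-1` on the left clique,
`i` on the `i`-th path vertex and `b` on the right clique changes by at most one along an edge, so
from any vertex a quarter of the path lies at distance at least `b / 4`, and all transmissions are
at least `(b / 4)²`. Hence each of the `m` edge terms is of order `1 / b` and
`SJ(D_{a,b}) ≍ (m / a²) · (m / b)`, which is bounded above and below whenever `a² ≍ b`;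
this is the case when `a ~ c √n`.
-/

open SimpleGraph Topology

section Balaban

variable {V : Type*} [Fintype V] (G : SimpleGraph V)

lemma one_le_transmission_of_adj {u v : V} (h : G.Adj u v) : 1 ≤ transmission G u :=
  (dist_eq_one_iff_adj.mpr h).symm.le.trans
    (Finset.single_le_sum (f := G.dist u) (fun _ _ => Nat.zero_le _) (Finset.mem_univ v))

lemma edgeTerm_mk (u v : V) :
    edgeTerm G s(u, v) = (√((transmission G u : ℝ) + transmission G v))⁻¹ := by
  simp [edgeTerm]

lemma edgeTerm_le_inv {r : ℝ} (hr : 0 < r) (h : ∀ v, r ^ 2 ≤ transmission G v) (e : Sym2 V) :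
    edgeTerm G e ≤ r⁻¹ := by
  induction e with
  | h u v =>
    rw [edgeTerm_mk]
    gcongr
    calc r = √(r ^ 2) := (Real.sqrt_sq hr.le).symm
      _ ≤ _ := Real.sqrt_le_sqrt (by linarith [h u, h v, sq_nonneg r])

lemma inv_two_mul_le_edgeTerm {s : ℝ} (h : ∀ v, transmission G v ≤ s ^ 2) {e : Sym2 V}
    (he : e ∈ G.edgeSet) : (2 * s)⁻¹ ≤ edgeTerm G e := by
  induction e with
  | h u v =>
    have hu : (1 : ℝ) ≤ transmission G u := by exact_mod_cast one_le_transmission_of_adj G he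
    rw [edgeTerm_mk]
    rcases le_or_gt s 0 with hs | hs
    · exact (inv_nonpos.mpr (by linarith)).trans (by positivity)
    gcongr
    calc √((transmission G u : ℝ) + transmission G v) ≤ √((2 * s) ^ 2) :=
          Real.sqrt_le_sqrt (by nlinarith [h u, h v])
      _ = 2 * s := Real.sqrt_sq (by linarith)

lemma sum_sum_adj_ite_eq [DecidableRel G.Adj] :
    ∑ u, ∑ v, (if G.Adj u v then 1 else 0) = 2 * #G.edgeFinset := by
  simp only [← sum_degrees_eq_twice_card_edges, ← card_neighborFinset_eq_degree,
    neighborFinset_eq_filter, Finset.card_filter]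

variable [DecidableEq V] [DecidableRel G.Adj]

lemma sumBalaban_le_of_sq_le_transmission {r : ℝ} (hV : Fintype.card V ≤ #G.edgeFinset + 1)
    (hr : 0 < r) (h : ∀ v, r ^ 2 ≤ transmission G v) :
    sumBalaban G ≤
      #G.edgeFinset / (#G.edgeFinset - Fintype.card V + 2 : ℝ) * (#G.edgeFinset / r) := by
  have hV' : (Fintype.card V : ℝ) ≤ #G.edgeFinset + 1 := by exact_mod_cast hV
  rw [sumBalaban, div_eq_mul_inv (#G.edgeFinset : ℝ) r]
  gcongr
  · exact div_nonneg (Nat.cast_nonneg _) (by linarith)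
  · simpa using Finset.sum_le_card_nsmul _ _ _ fun e _ => edgeTerm_le_inv G hr h e

lemma le_sumBalaban_of_transmission_le_sq {s : ℝ} (hV : Fintype.card V ≤ #G.edgeFinset + 1)
    (h : ∀ v, transmission G v ≤ s ^ 2) :
    #G.edgeFinset / (#G.edgeFinset - Fintype.card V + 2 : ℝ) * (#G.edgeFinset / (2 * s)) ≤
      sumBalaban G := by
  have hV' : (Fintype.card V : ℝ) ≤ #G.edgeFinset + 1 := by exact_mod_cast hV
  rw [sumBalaban, div_eq_mul_inv (#G.edgeFinset : ℝ) (2 * s)]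
  gcongr
  · exact div_nonneg (Nat.cast_nonneg _) (by linarith)
  · simpa using Finset.card_nsmul_le_sum _ _ _ fun e he =>
      inv_two_mul_le_edgeTerm G h (G.mem_edgeFinset.mp he)

end Balaban

lemma SimpleGraph.Walk.natAbs_sub_le_length {V : Type*} {G : SimpleGraph V} {f : V → ℤ}
    (hf : ∀ u v, G.Adj u v → (f u - f v).natAbs ≤ 1) {u v : V} (w : G.Walk u v) :
    (f u - f v).natAbs ≤ w.length := by
  induction w with
  | nil => simp
  | cons h _ ih =>
    rw [Walk.length_cons]
    have := hf _ _ h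
    omega

lemma SimpleGraph.Reachable.natAbs_sub_le_dist {V : Type*} {G : SimpleGraph V} {f : V → ℤ}
    (hf : ∀ u v, G.Adj u v → (f u - f v).natAbs ≤ 1) {u v : V} (huv : G.Reachable u v) :
    (f u - f v).natAbs ≤ G.dist u v := by
  obtain ⟨w, hw⟩ := huv.exists_walk_length_eq_dist
  exact hw ▸ w.natAbs_sub_le_length hf

section Counting

lemma Fin.sum_ite_val_eq {M : Type*} [AddCommMonoid M] {n k : ℕ} (hk : k < n) (c : M) :
    ∑ i : Fin n, (if (i : ℕ) = k then c else 0) = c := by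
  rw [Fin.sum_univ_eq_sum_range (fun i => if i = k then c else 0), Finset.sum_ite_eq']
  simp [hk]

lemma sum_ite_ne_eq {α : Type*} [Fintype α] [DecidableEq α] (i : α) :
    ∑ j, (if i ≠ j then 1 else 0) = Fintype.card α - 1 := by
  rw [Finset.sum_boole, Finset.filter_ne, Finset.card_erase_of_mem (Finset.mem_univ i)]
  simp

lemma sum_sum_ite_succ_eq (n : ℕ) :
    ∑ i : Fin n, ∑ j : Fin n, (if (i : ℕ) + 1 = j then 1 else 0) = n - 1 := by
  have hsucc (i : ℕ) :
      ∑ j : Fin n, (if i + 1 = (j : ℕ) then 1 else 0) = if i + 1 ∈ range n then 1 else 0 := by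
    rw [Fin.sum_univ_eq_sum_range (fun j => if i + 1 = j then 1 else 0), Finset.sum_ite_eq]
  simp only [hsucc]
  rw [Fin.sum_univ_eq_sum_range (fun i => if i + 1 ∈ range n then 1 else 0), Finset.sum_boole,
    Nat.cast_id, show (range n).filter (· + 1 ∈ range n) = range (n - 1) by ext; simp; omega,
    Finset.card_range]

lemma sum_sum_ite_adjacent_eq (n : ℕ) :
    ∑ i : Fin n, ∑ j : Fin n, (if (i : ℕ) + 1 = j ∨ (j : ℕ) + 1 = i then 1 else 0) =
      2 * (n - 1) := by
  have hsplit (i j : Fin n) : (if (i : ℕ) + 1 = j ∨ (j : ℕ) + 1 = i then 1 else 0) =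
      (if (i : ℕ) + 1 = j then 1 else 0) + (if (j : ℕ) + 1 = i then 1 else 0) := by
    split_ifs <;> omega
  simp only [hsplit, Finset.sum_add_distrib]
  rw [Finset.sum_comm (f := fun i j : Fin n => if (j : ℕ) + 1 = i then 1 else 0),
    sum_sum_ite_succ_eq]
  ring

lemma sq_div_four_le_sum_natAbs_sub (t : ℤ) (b : ℕ) :
    (b / 4) ^ 2 ≤ ∑ j ∈ range b, (t - j).natAbs := by
  obtain ⟨S, hS, hcard, hfar⟩ : ∃ S ⊆ range b, #S = b / 4 ∧ ∀ j ∈ S, b / 4 ≤ (t - j).natAbs := by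
    by_cases ht : 2 * t ≤ b
    · refine ⟨Ico (b - b / 4) b, fun j hj => ?_, by simp; omega, fun j hj => ?_⟩ <;>
        simp only [mem_Ico, mem_range] at hj ⊢ <;> omega
    · refine ⟨range (b / 4), fun j hj => ?_, by simp, fun j hj => ?_⟩ <;>
        simp only [mem_range] at hj ⊢ <;> omega
  calc (b / 4) ^ 2 = #S • (b / 4) := by rw [hcard, smul_eq_mul, sq]
    _ ≤ ∑ j ∈ S, (t - j).natAbs := card_nsmul_le_sum _ _ _ hfar
    _ ≤ _ := sum_le_sum_of_subset hS

end Counting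

section Dumbbell

variable {a b a' : ℕ}

@[simp] lemma dumbbell_adj_left_left {x y : Fin a} :
    (dumbbell a b a').Adj (.inl (.inl x)) (.inl (.inl y)) ↔ x ≠ y := by
  simp [dumbbell]

@[simp] lemma dumbbell_adj_left_path {x : Fin a} {i : Fin b} :
    (dumbbell a b a').Adj (.inl (.inl x)) (.inl (.inr i)) ↔ (i : ℕ) = 0 := by
  simp [dumbbell]

@[simp] lemma dumbbell_adj_path_left {x : Fin a} {i : Fin b} :
    (dumbbell a b a').Adj (.inl (.inr i)) (.inl (.inl x)) ↔ (i : ℕ) = 0 := by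
  simp [dumbbell]

@[simp] lemma dumbbell_adj_path_path {i j : Fin b} :
    (dumbbell a b a').Adj (.inl (.inr i)) (.inl (.inr j)) ↔
      (i : ℕ) + 1 = j ∨ (j : ℕ) + 1 = i := by
  simp [dumbbell, Fin.ext_iff]
  omega

@[simp] lemma dumbbell_adj_path_right {i : Fin b} {y : Fin a'} :
    (dumbbell a b a').Adj (.inl (.inr i)) (.inr y) ↔ (i : ℕ) = b - 1 := by
  simp [dumbbell]

@[simp] lemma dumbbell_adj_right_path {i : Fin b} {y : Fin a'} :
    (dumbbell a b a').Adj (.inr y) (.inl (.inr i)) ↔ (i : ℕ) = b - 1 := by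
  simp [dumbbell]

@[simp] lemma dumbbell_adj_right_right {x y : Fin a'} :
    (dumbbell a b a').Adj (.inr x) (.inr y) ↔ x ≠ y := by
  simp [dumbbell]

@[simp] lemma not_dumbbell_adj_left_right {x : Fin a} {y : Fin a'} :
    ¬ (dumbbell a b a').Adj (.inl (.inl x)) (.inr y) := by
  simp [dumbbell]

@[simp] lemma not_dumbbell_adj_right_left {x : Fin a} {y : Fin a'} :
    ¬ (dumbbell a b a').Adj (.inr y) (.inl (.inl x)) := by
  simp [dumbbell]

lemma card_dumbbell_vertices : Fintype.card ((Fin a ⊕ Fin b) ⊕ Fin a') = a + b + a' := by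
  simp

lemma card_edgeFinset_dumbbell (hb : 0 < b) :
    #(dumbbell a b a).edgeFinset + 1 = a ^ 2 + a + b := by
  have h := sum_sum_adj_ite_eq (dumbbell a b a)
  simp only [Fintype.sum_sum_type, dumbbell_adj_left_left, dumbbell_adj_left_path,
    dumbbell_adj_path_left, dumbbell_adj_path_path, dumbbell_adj_path_right,
    dumbbell_adj_right_path, dumbbell_adj_right_right, not_dumbbell_adj_left_right,
    not_dumbbell_adj_right_left, Finset.sum_add_distrib, sum_ite_ne_eq, sum_sum_ite_adjacent_eq,
    Fin.sum_ite_val_eq hb, Fin.sum_ite_val_eq (Nat.sub_lt hb one_pos), Finset.sum_const,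
    Finset.card_univ, Fintype.card_fin, smul_eq_mul, mul_ite, mul_one, mul_zero, ite_false,
    add_zero, zero_add] at h
  rw [Nat.mul_sub_one] at h
  have := Nat.le_mul_self a
  rw [sq]
  omega

lemma card_dumbbell_vertices_le (hb : 0 < b) :
    Fintype.card ((Fin a ⊕ Fin b) ⊕ Fin a) ≤ #(dumbbell a b a).edgeFinset + 1 := by
  rw [card_dumbbell_vertices, card_edgeFinset_dumbbell hb]
  nlinarith

lemma cast_card_edgeFinset_dumbbell (hb : 0 < b) :
    (#(dumbbell a b a).edgeFinset : ℝ) = a ^ 2 + a + b - 1 := by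
  rw [eq_sub_iff_add_eq]
  exact_mod_cast card_edgeFinset_dumbbell hb

lemma exists_walk_path_to_path_zero (hb : 0 < b) :
    ∀ k (hk : k < b), ∃ w : (dumbbell a b a').Walk (.inl (.inr ⟨k, hk⟩)) (.inl (.inr ⟨0, hb⟩)),
      w.length = k
  | 0, _ => ⟨.nil, rfl⟩
  | k + 1, hk => by
    obtain ⟨w, hw⟩ := exists_walk_path_to_path_zero hb k (by omega)
    exact ⟨.cons (dumbbell_adj_path_path.mpr (Or.inr rfl)) w, by simp [hw]⟩

lemma exists_walk_to_path_zero (hb : 0 < b) (v : (Fin a ⊕ Fin b) ⊕ Fin a') :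
    ∃ w : (dumbbell a b a').Walk v (.inl (.inr ⟨0, hb⟩)), w.length ≤ b := by
  obtain (x | ⟨i, hi⟩) | y := v
  · exact ⟨.cons (dumbbell_adj_left_path.mpr rfl) .nil, by simpa using Nat.one_le_of_lt hb⟩
  · obtain ⟨w, hw⟩ := exists_walk_path_to_path_zero (a := a) (a' := a') hb i hi
    exact ⟨w, by omega⟩
  · obtain ⟨w, hw⟩ := exists_walk_path_to_path_zero (a := a) (a' := a') hb (b - 1) (by omega)
    exact ⟨.cons (dumbbell_adj_right_path.mpr rfl) w, by simp [hw]; omega⟩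

lemma dumbbell_reachable (hb : 0 < b) (u v : (Fin a ⊕ Fin b) ⊕ Fin a') :
    (dumbbell a b a').Reachable u v := by
  obtain ⟨wu, -⟩ := exists_walk_to_path_zero hb u
  obtain ⟨wv, -⟩ := exists_walk_to_path_zero hb v
  exact ⟨wu.append wv.reverse⟩

lemma dumbbell_dist_le (hb : 0 < b) (u v : (Fin a ⊕ Fin b) ⊕ Fin a') :
    (dumbbell a b a').dist u v ≤ 2 * b := by
  obtain ⟨wu, hu⟩ := exists_walk_to_path_zero hb u
  obtain ⟨wv, hv⟩ := exists_walk_to_path_zero hb v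
  refine (dist_le (wu.append wv.reverse)).trans ?_
  rw [Walk.length_append, Walk.length_reverse]
  omega

def dumbbellHeight (a b a' : ℕ) : (Fin a ⊕ Fin b) ⊕ Fin a' → ℤ
  | .inl (.inl _) => -1
  | .inl (.inr i) => i
  | .inr _ => b

lemma natAbs_sub_dumbbellHeight_le_one (u v : (Fin a ⊕ Fin b) ⊕ Fin a')
    (h : (dumbbell a b a').Adj u v) :
    (dumbbellHeight a b a' u - dumbbellHeight a b a' v).natAbs ≤ 1 := by
  obtain (x | i) | x := u <;> obtain (y | j) | y := v <;>
    simp [dumbbellHeight] at h ⊢ <;> omega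

lemma transmission_dumbbell_le (hb : 0 < b) (v : (Fin a ⊕ Fin b) ⊕ Fin a') :
    transmission (dumbbell a b a') v ≤ (a + b + a') * (2 * b) :=
  calc transmission (dumbbell a b a') v ≤ Finset.univ.card • (2 * b) :=
        Finset.sum_le_card_nsmul _ _ _ fun u _ => dumbbell_dist_le hb v u
    _ = (a + b + a') * (2 * b) := by simp

lemma sq_div_four_le_transmission_dumbbell (hb : 0 < b) (v : (Fin a ⊕ Fin b) ⊕ Fin a') :
    (b / 4) ^ 2 ≤ transmission (dumbbell a b a') v :=
  calc (b / 4) ^ 2 ≤ ∑ j : Fin b, (dumbbellHeight a b a' v - (j : ℕ)).natAbs := by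
        rw [Fin.sum_univ_eq_sum_range (fun j => (dumbbellHeight a b a' v - j).natAbs)]
        exact sq_div_four_le_sum_natAbs_sub _ b
    _ ≤ ∑ j : Fin b, (dumbbell a b a').dist v (.inl (.inr j)) :=
        Finset.sum_le_sum fun j _ => (dumbbell_reachable hb v (.inl (.inr j))).natAbs_sub_le_dist
          natAbs_sub_dumbbellHeight_le_one
    _ ≤ transmission (dumbbell a b a') v := by
        rw [transmission, Fintype.sum_sum_type, Fintype.sum_sum_type]
        omega

lemma one_quarter_le_sumBalaban_dumbbell (ha : 1 ≤ a) (hab : 2 * a ≤ b) :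
    1 / 4 ≤ sumBalaban (dumbbell a b a) := by
  have hb : 0 < b := by omega
  have hw (v : (Fin a ⊕ Fin b) ⊕ Fin a) : (transmission (dumbbell a b a) v : ℝ) ≤ (2 * b) ^ 2 := by
    have : (a + b + a) * (2 * b) ≤ (2 * b) ^ 2 := by nlinarith
    exact_mod_cast (transmission_dumbbell_le hb v).trans this
  refine le_trans ?_ (le_sumBalaban_of_transmission_le_sq _ (card_dumbbell_vertices_le hb) hw)
  rw [cast_card_edgeFinset_dumbbell hb, card_dumbbell_vertices]
  push_cast
  have hA : (1 : ℝ) ≤ a := by exact_mod_cast ha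
  have hB : (0 : ℝ) < b := by exact_mod_cast hb
  have hprefactor : 1 ≤ ((a : ℝ) ^ 2 + a + b - 1) / (a ^ 2 + a + b - 1 - (a + b + a) + 2) := by
    rw [one_le_div (by nlinarith)]
    linarith
  have hsum : 1 / 4 ≤ ((a : ℝ) ^ 2 + a + b - 1) / (2 * (2 * b)) := by
    rw [le_div_iff₀ (by positivity)]
    nlinarith
  simpa using mul_le_mul hprefactor hsum (by norm_num) (by positivity)

lemma sumBalaban_dumbbell_le {K : ℝ} (hK : 0 < K) (hb : 8 ≤ b) (hab : (a : ℝ) ^ 2 ≤ K * b)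
    (hba : (b : ℝ) ≤ K * a ^ 2) :
    sumBalaban (dumbbell a b a) ≤ 16 * K * (2 * K + 1) ^ 2 := by
  have hb0 : 0 < b := by omega
  set r : ℝ := ((b / 4 : ℕ) : ℝ) with hr
  have hB : (8 : ℝ) ≤ b := by exact_mod_cast hb
  have hr8 : (b : ℝ) ≤ 8 * r := by
    rw [hr]
    exact_mod_cast (by omega : b ≤ 8 * (b / 4))
  have hw (v : (Fin a ⊕ Fin b) ⊕ Fin a) : r ^ 2 ≤ transmission (dumbbell a b a) v := by
    rw [hr]
    exact_mod_cast sq_div_four_le_transmission_dumbbell hb0 v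
  refine (sumBalaban_le_of_sq_le_transmission _ (card_dumbbell_vertices_le hb0) (by linarith)
    hw).trans ?_
  rw [cast_card_edgeFinset_dumbbell hb0, card_dumbbell_vertices]
  push_cast
  have hA : (a : ℝ) ≤ a ^ 2 := by exact_mod_cast Nat.le_self_pow two_ne_zero a
  have hm : (a : ℝ) ^ 2 + a + b - 1 ≤ (2 * K + 1) * b := by nlinarith
  have hprefactor :
      ((a : ℝ) ^ 2 + a + b - 1) / (a ^ 2 + a + b - 1 - (a + b + a) + 2) ≤ 2 * K * (2 * K + 1) := by
    rw [div_le_iff₀ (by nlinarith)]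
    nlinarith
  have hsum : ((a : ℝ) ^ 2 + a + b - 1) / r ≤ 8 * (2 * K + 1) := by
    rw [div_le_iff₀ (by linarith)]
    nlinarith
  calc _ ≤ 2 * K * (2 * K + 1) * (8 * (2 * K + 1)) :=
        mul_le_mul hprefactor hsum (div_nonneg (by nlinarith) (by linarith)) (by positivity)
    _ = 16 * K * (2 * K + 1) ^ 2 := by ring

end Dumbbell

lemma eventually_dumbbell_scales {c : ℝ} (hc : 0 < c) {a : ℕ → ℕ}
    (ha : Tendsto (fun n : ℕ => (a n : ℝ) / √n) atTop (𝓝 c)) :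
    ∀ᶠ n : ℕ in atTop, 1 ≤ a n ∧ 2 * a n ≤ n - 2 * a n ∧ 8 ≤ n - 2 * a n ∧
      (a n : ℝ) ^ 2 ≤ (4 * c ^ 2 + 2 / c ^ 2) * (n - 2 * a n : ℕ) ∧
      ((n - 2 * a n : ℕ) : ℝ) ≤ (4 * c ^ 2 + 2 / c ^ 2) * a n ^ 2 := by
  have hsq : Tendsto (fun n : ℕ => (a n : ℝ) ^ 2 / n) atTop (𝓝 (c ^ 2)) :=
    (ha.pow 2).congr fun n => by rw [div_pow, Real.sq_sqrt n.cast_nonneg]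
  have hlin : Tendsto (fun n : ℕ => (a n : ℝ) / n) atTop (𝓝 0) :=
    (ha.div_atTop (Real.tendsto_sqrt_atTop.comp tendsto_natCast_atTop_atTop)).congr fun n => by
      simp [div_div, Real.mul_self_sqrt n.cast_nonneg]
  have hc2 : 0 < c ^ 2 := by positivity
  filter_upwards [hsq.eventually (lt_mem_nhds (half_lt_self hc2)),
    hsq.eventually (gt_mem_nhds (by linarith : c ^ 2 < 2 * c ^ 2)),
    hlin.eventually (gt_mem_nhds (by norm_num : (0 : ℝ) < 1 / 4)), eventually_ge_atTop 16]
    with n hlo hhi hsmall hn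
  have hN : (16 : ℝ) ≤ n := by exact_mod_cast hn
  rw [lt_div_iff₀ (by linarith)] at hlo
  rw [div_lt_iff₀ (by linarith)] at hhi hsmall
  have h4a : 4 * a n < n := by exact_mod_cast (by linarith : (4 * a n : ℝ) < n)
  have hb : ((n - 2 * a n : ℕ) : ℝ) = n - 2 * a n := by
    push_cast [Nat.cast_sub (by omega : 2 * a n ≤ n)]
    ring
  have hK : 0 ≤ 2 / c ^ 2 := by positivity
  refine ⟨Nat.one_le_iff_ne_zero.mpr fun h0 => ?_, by omega, by omega, ?_, ?_⟩
  · simp [h0] at hlo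
    nlinarith
  · rw [hb]
    nlinarith
  · have hn_le : (n : ℝ) ≤ 2 / c ^ 2 * a n ^ 2 := by
      rw [div_mul_eq_mul_div, le_div_iff₀ hc2]
      linarith
    rw [hb]
    nlinarith

theorem stmt_16 (c : ℝ) (hc : 0 < c) (a : ℕ → ℕ)
    (ha : Tendsto (fun n : ℕ => (a n : ℝ) / Real.sqrt n) atTop (nhds c)) :
    ∃ C₁ C₂ : ℝ, 0 < C₁ ∧ 0 < C₂ ∧
      ∀ᶠ n : ℕ in atTop,
        C₁ ≤ sumBalaban (dumbbell (a n) (n - 2 * a n) (a n)) ∧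
        sumBalaban (dumbbell (a n) (n - 2 * a n) (a n)) ≤ C₂ := by
  set K := 4 * c ^ 2 + 2 / c ^ 2
  have hK : 0 < K := by positivity
  refine ⟨1 / 4, 16 * K * (2 * K + 1) ^ 2, by norm_num, by positivity, ?_⟩
  filter_upwards [eventually_dumbbell_scales hc ha] with n ⟨ha1, hab, hb8, hab2, hba2⟩
  exact ⟨one_quarter_le_sumBalaban_dumbbell ha1 hab, sumBalaban_dumbbell_le hK hb8 hab2 hba2⟩
end
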